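/- For 0 ≤ s ≤ m and k ≥ 0, the space P_k^s of s-forms with homogeneous polynomial coefficients of degree k on R^m decomposes as P_k^s = ⊕_{j=0}^{⌊k/2⌋} r^{2j} · Ker_{k-2j}^s Δ, where r^2 = x_1^2 + ... + x_m^2 and Δ is the Hodge Laplacian (Fischer decomposition for forms). -/

import Mathlib

open MvPolynomial

/-- Mixed polynomial differential forms on ℝ^m: one polynomial coefficient for each
increasing multi-index (i.e. each subset of the coordinates). -/
abbrev MixedForm (m : ℕ) := Finset (Fin m) → MvPolynomial (Fin m) ℝ

/-- The sign `(-1)^{#{j ∈ B : j < i}}`. -/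
noncomputable def fsgn {m : ℕ} (i : Fin m) (B : Finset (Fin m)) : ℝ :=
  (-1 : ℝ) ^ (B.filter (fun j => j < i)).card

/-- The exterior derivative on polynomial forms. -/
noncomputable def extD (m : ℕ) : MixedForm m →ₗ[ℝ] MixedForm m :=
  LinearMap.pi fun B => ∑ i ∈ B, fsgn i B •
    ((pderiv i).toLinearMap ∘ₗ LinearMap.proj (B.erase i))

/-- The codifferential (formal adjoint of the exterior derivative) on polynomial forms. -/
noncomputable def coD (m : ℕ) : MixedForm m →ₗ[ℝ] MixedForm m :=
  LinearMap.pi fun B => ∑ i ∈ Bᶜ, fsgn i B •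
    ((pderiv i).toLinearMap ∘ₗ LinearMap.proj (insert i B))

/-- Forms all of whose coefficients are homogeneous polynomials of degree `k`. -/
noncomputable def Homog (m k : ℕ) : Submodule ℝ (MixedForm m) where
  carrier := {P | ∀ B, (P B).IsHomogeneous k}
  add_mem' := fun ha hb B => (ha B).add (hb B)
  zero_mem' := fun B => isHomogeneous_zero _ _ _
  smul_mem' := by
    intro c P h B
    have h2 : (c • P) B = (C c : MvPolynomial (Fin m) ℝ) * P B := by
      simp [smul_eq_C_mul]
    rw [h2]
    simpa using (isHomogeneous_C (Fin m) c).mul (h B)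

/-- Forms supported in form-degrees belonging to the set `S`. -/
noncomputable def DegSupp (m : ℕ) (S : Set ℕ) : Submodule ℝ (MixedForm m) where
  carrier := {P | ∀ B : Finset (Fin m), B.card ∉ S → P B = 0}
  add_mem' := by intro a b ha hb B hB; simp [ha B hB, hb B hB]
  zero_mem' := by intro B hB; rfl
  smul_mem' := by intro c a ha B hB; simp [ha B hB]

/-- Homogeneity-`k` polynomial solutions of the Hodge–de Rham system in form-degree `s`. -/
noncomputable def Hsp (m k s : ℕ) : Submodule ℝ (MixedForm m) :=
  Homog m k ⊓ DegSupp m {s} ⊓ LinearMap.ker (extD m) ⊓ LinearMap.ker (coD m)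

/-- Homogeneity-`k` polynomial solutions of the generalized Moisil–Théodoresco system
of type `(r,p,q)`. -/
noncomputable def MTsp (m k r p q : ℕ) : Submodule ℝ (MixedForm m) :=
  Homog m k ⊓ DegSupp m {t | ∃ j, p ≤ j ∧ j ≤ q ∧ t = r + 2 * j} ⊓
    LinearMap.ker (extD m + coD m)

/-- The Hodge Laplacian `Δ = d d* + d* d`. -/
noncomputable def hodgeLap (m : ℕ) : MixedForm m →ₗ[ℝ] MixedForm m :=
  extD m ∘ₗ coD m + coD m ∘ₗ extD m

/-- Harmonic `s`-forms with homogeneous polynomial coefficients of degree `k`. -/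
noncomputable def KerDelta (m k s : ℕ) : Submodule ℝ (MixedForm m) :=
  Homog m k ⊓ DegSupp m {s} ⊓ LinearMap.ker (hodgeLap m)

/-- Multiplication of all coefficients by `r^{2j} = (x_1^2 + ⋯ + x_m^2)^j`. -/
noncomputable def mulRpow (m j : ℕ) : MixedForm m →ₗ[ℝ] MixedForm m :=
  LinearMap.pi fun B =>
    (LinearMap.mulLeft ℝ ((∑ i, X i ^ 2 : MvPolynomial (Fin m) ℝ) ^ j)) ∘ₗ
      LinearMap.proj B

/-- The dimension `d(k,m,s)` of the space of homogeneity-`k` polynomial solutions of the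
Hodge–de Rham system in degree `s`, with the conventions `d(k,m,s) = 0` for `k < 0` or
`s ∉ [0,m]`, `d(0,m,0) = d(0,m,m) = 1` and `d(k,m,0) = d(k,m,m) = 0` for `k ≥ 1`. -/
noncomputable def dHR (m : ℕ) (k s : ℤ) : ℚ :=
  if k < 0 ∨ s < 0 ∨ (m : ℤ) < s then 0
  else if s = 0 ∨ s = m then (if k = 0 then 1 else 0)
  else ((m - 2).choose (s.toNat - 1) : ℚ) * ((k.toNat + m - 2).choose (m - 2) : ℚ) *
    ((2 * (k : ℚ) + m) * ((k : ℚ) + m - 1)) / (((k : ℚ) + s) * ((k : ℚ) + m - s))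

/-- The dimension of the space of homogeneous polynomials of degree `k` on ℝ^m
(zero for negative `k`). -/
noncomputable def pdim (m : ℕ) (k : ℤ) : ℚ :=
  if k < 0 then 0 else ((k.toNat + m - 1).choose (m - 1) : ℚ)

/-- The subspace of `s`-forms with homogeneous polynomial coefficients of degree `k`
lying in the kernel of the operator `T`. -/
noncomputable def Kof (m k s : ℕ) (T : MixedForm m →ₗ[ℝ] MixedForm m) :
    Submodule ℝ (MixedForm m) :=
  Homog m k ⊓ DegSupp m {s} ⊓ LinearMap.ker T

noncomputable section Scalar

variable {m : ℕ}

abbrev Pol (m : ℕ) := MvPolynomial (Fin m) ℝ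

def r2 (m : ℕ) : Pol m := ∑ i, X i ^ 2

def lap (m : ℕ) : Pol m →ₗ[ℝ] Pol m :=
  ∑ i : Fin m, ((pderiv i).toLinearMap ∘ₗ (pderiv i).toLinearMap)

def ffact (a : Fin m →₀ ℕ) : ℝ := ∏ j, ((a j).factorial : ℝ)

def Bf (p q : Pol m) : ℝ := ∑ a ∈ q.support, coeff a p * coeff a q * ffact a

lemma ffact_pos (a : Fin m →₀ ℕ) : 0 < ffact a :=
  Finset.prod_pos fun j _ => by positivity

lemma Bf_eq_sum_subset (p q : Pol m) {S : Finset (Fin m →₀ ℕ)} (hS : q.support ⊆ S) :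
    Bf p q = ∑ a ∈ S, coeff a p * coeff a q * ffact a := by
  refine Finset.sum_subset hS fun a _ ha => ?_
  rw [MvPolynomial.notMem_support_iff] at ha
  simp [ha]

lemma Bf_add_right (p q r : Pol m) : Bf p (q + r) = Bf p q + Bf p r := by
  rw [Bf_eq_sum_subset p (q + r) (MvPolynomial.support_add),
    Bf_eq_sum_subset p q (Finset.subset_union_left),
    Bf_eq_sum_subset p r (Finset.subset_union_right), ← Finset.sum_add_distrib]
  refine Finset.sum_congr rfl fun a _ => ?_
  rw [MvPolynomial.coeff_add]; ring

lemma Bf_zero_right (p : Pol m) : Bf p 0 = 0 := by simp [Bf]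

lemma Bf_sum_right {ι : Type*} (p : Pol m) (s : Finset ι) (f : ι → Pol m) :
    Bf p (∑ i ∈ s, f i) = ∑ i ∈ s, Bf p (f i) := by
  classical
  induction s using Finset.induction_on with
  | empty => simp [Bf_zero_right]
  | insert _ _ h ih => rw [Finset.sum_insert h, Finset.sum_insert h, Bf_add_right, ih]

lemma Bf_add_left (p q r : Pol m) : Bf (p + q) r = Bf p r + Bf q r := by
  unfold Bf
  rw [← Finset.sum_add_distrib]
  refine Finset.sum_congr rfl fun a _ => ?_
  rw [MvPolynomial.coeff_add]; ring

lemma Bf_sum_left {ι : Type*} (s : Finset ι) (f : ι → Pol m) (p : Pol m) :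
    Bf (∑ i ∈ s, f i) p = ∑ i ∈ s, Bf (f i) p := by
  classical
  induction s using Finset.induction_on with
  | empty => simp [Bf]
  | insert _ _ h ih => rw [Finset.sum_insert h, Finset.sum_insert h, Bf_add_left, ih]

lemma Bf_monomial_right (p : Pol m) (v : Fin m →₀ ℕ) (d : ℝ) :
    Bf p (monomial v d) = coeff v p * d * ffact v := by
  classical
  by_cases hd : d = 0
  · simp [hd, Bf_zero_right]
  · unfold Bf
    rw [MvPolynomial.support_monomial, if_neg hd, Finset.sum_singleton, coeff_monomial,
      if_pos rfl]

lemma ffact_sub_single (v : Fin m →₀ ℕ) (i : Fin m) (hv : v i ≠ 0) :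
    ffact v = ffact (v - Finsupp.single i 1) * (v i : ℝ) := by
  unfold ffact
  rw [← Finset.prod_erase_mul _ _ (Finset.mem_univ i), ← Finset.prod_erase_mul _ _ (Finset.mem_univ i)]
  have h1 : ∀ j ∈ Finset.univ.erase i, (((v - Finsupp.single i 1 : Fin m →₀ ℕ) j).factorial : ℝ) = ((v j).factorial : ℝ) := by
    intro j hj
    have hji : j ≠ i := (Finset.mem_erase.mp hj).1
    rw [Finsupp.tsub_apply, Finsupp.single_eq_of_ne' (Ne.symm hji), Nat.sub_zero]
  rw [Finset.prod_congr rfl h1]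
  have h2 : (v - Finsupp.single i 1 : Fin m →₀ ℕ) i = v i - 1 := by
    rw [Finsupp.tsub_apply, Finsupp.single_eq_same]
  rw [h2]
  obtain ⟨n, hn⟩ := Nat.exists_eq_succ_of_ne_zero hv
  rw [hn]
  simp [Nat.factorial_succ]
  ring

lemma Bf_X_mul_monomial (i : Fin m) (p : Pol m) (v : Fin m →₀ ℕ) (d : ℝ) :
    Bf (X i * p) (monomial v d) = Bf p ((pderiv i) (monomial v d)) := by
  classical
  rw [Bf_monomial_right, pderiv_monomial, Bf_monomial_right]
  by_cases hv : v i = 0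
  · rw [MvPolynomial.coeff_X_mul']
    simp [Finsupp.mem_support_iff, hv]
  · rw [MvPolynomial.coeff_X_mul', if_pos (by simpa [Finsupp.mem_support_iff] using hv),
      ffact_sub_single v i hv]
    push_cast
    ring

lemma Bf_X_mul (i : Fin m) (p q : Pol m) :
    Bf (X i * p) q = Bf p ((pderiv i) q) := by
  classical
  conv_lhs => rw [as_sum q]
  conv_rhs => rw [as_sum q]
  rw [Bf_sum_right, map_sum, Bf_sum_right]
  exact Finset.sum_congr rfl fun v _ => Bf_X_mul_monomial i p v (coeff v q)

lemma Bf_r2_mul (p q : Pol m) : Bf (r2 m * p) q = Bf p (lap m q) := by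
  have : r2 m * p = ∑ i : Fin m, X i * (X i * p) := by
    rw [r2, Finset.sum_mul]
    refine Finset.sum_congr rfl fun i _ => by ring
  rw [this, Bf_sum_left]
  have hl : lap m q = ∑ i : Fin m, (pderiv i) ((pderiv i) q) := by
    rw [lap, LinearMap.sum_apply]
    rfl
  rw [hl, Bf_sum_right]
  refine Finset.sum_congr rfl fun i _ => ?_
  rw [Bf_X_mul, Bf_X_mul]

lemma Bf_self_eq_zero {p : Pol m} (h : Bf p p = 0) : p = 0 := by
  classical
  by_contra hp
  obtain ⟨a, ha⟩ : p.support.Nonempty := by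
    rwa [Finset.nonempty_iff_ne_empty, Ne, MvPolynomial.support_eq_empty]
  have hterm : ∀ b ∈ p.support, 0 ≤ coeff b p * coeff b p * ffact b := by
    intro b _
    have := ffact_pos b
    nlinarith [sq_nonneg (coeff b p)]
  have := (Finset.sum_eq_zero_iff_of_nonneg hterm).mp h a ha
  have hca : coeff a p ≠ 0 := (MvPolynomial.mem_support_iff).mp ha
  exact (mul_pos (mul_self_pos.2 hca) (ffact_pos a)).ne' this

/-- Key disjointness: a harmonic multiple of `r2` is zero. -/
lemma harmonic_r2_mul_eq_zero {q : Pol m} (h : lap m (r2 m * q) = 0) : r2 m * q = 0 := by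
  apply Bf_self_eq_zero
  calc Bf (r2 m * q) (r2 m * q) = Bf q (lap m (r2 m * q)) := Bf_r2_mul _ _
  _ = 0 := by rw [h, Bf_zero_right]

end Scalar
noncomputable section Scalar2
open Finsupp LinearMap Submodule
variable {m : ℕ}

lemma degree_fin (d : Fin m →₀ ℕ) : d.degree = ∑ j, d j :=
  Finset.sum_subset (Finset.subset_univ _) fun j _ hj => Finsupp.notMem_support_iff.mp hj

lemma pderiv_isHomogeneous {p : Pol m} {n : ℕ} (i : Fin m) (h : p.IsHomogeneous n) :
    ((pderiv i) p).IsHomogeneous (n - 1) := by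
  classical
  rw [as_sum p, map_sum]
  apply MvPolynomial.IsHomogeneous.sum
  intro v hv
  rw [pderiv_monomial]
  by_cases hvi : v i = 0
  · rw [hvi]
    norm_num
    exact isHomogeneous_zero _ _ _
  · apply isHomogeneous_monomial
    have hdeg : v.degree = n := by
      have := h (MvPolynomial.mem_support_iff.mp hv)
      rwa [Finsupp.degree_eq_weight_one]
    have e1 : (v - Finsupp.single i 1 : Fin m →₀ ℕ).degree
        = ∑ j ∈ Finset.univ.erase i, v j + (v i - 1) := by
      rw [degree_fin, ← Finset.sum_erase_add _ _ (Finset.mem_univ i)]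
      congr 1
      · refine Finset.sum_congr rfl fun j hj => ?_
        rw [Finsupp.tsub_apply, Finsupp.single_eq_of_ne' (Ne.symm (Finset.mem_erase.mp hj).1),
          Nat.sub_zero]
      · rw [Finsupp.tsub_apply, Finsupp.single_eq_same]
    have e2 : n = ∑ j ∈ Finset.univ.erase i, v j + v i := by
      rw [← hdeg, degree_fin, ← Finset.sum_erase_add _ _ (Finset.mem_univ i)]
    omega

lemma pderiv_eq_zero_of_isHomogeneous_zero {p : Pol m} (i : Fin m)
    (h : p.IsHomogeneous 0) : (pderiv i) p = 0 := by
  classical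
  rw [as_sum p, map_sum]
  refine Finset.sum_eq_zero fun v hv => ?_
  have hdeg : v.degree = 0 := by
    have := h (MvPolynomial.mem_support_iff.mp hv)
    rwa [Finsupp.degree_eq_weight_one]
  have hvi : v i = 0 := by
    have := (Finsupp.degree_eq_zero_iff v).mp hdeg
    rw [this]; rfl
  rw [pderiv_monomial, hvi]
  norm_num

lemma lap_isHomogeneous {p : Pol m} {n : ℕ} (h : p.IsHomogeneous n) :
    (lap m p).IsHomogeneous (n - 2) := by
  have : lap m p = ∑ i : Fin m, (pderiv i) ((pderiv i) p) := by
    rw [lap, LinearMap.sum_apply]; rfl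
  rw [this]
  have : (n - 1) - 1 = n - 2 := by omega
  exact this ▸ MvPolynomial.IsHomogeneous.sum _ _ _
    (fun i _ => pderiv_isHomogeneous i (pderiv_isHomogeneous i h))

lemma lap_eq_zero_of_low {p : Pol m} {n : ℕ} (hn : n ≤ 1) (h : p.IsHomogeneous n) :
    lap m p = 0 := by
  have : lap m p = ∑ i : Fin m, (pderiv i) ((pderiv i) p) := by
    rw [lap, LinearMap.sum_apply]; rfl
  rw [this]
  refine Finset.sum_eq_zero fun i _ => ?_
  have h1 : ((pderiv i) p).IsHomogeneous 0 := by
    have := pderiv_isHomogeneous i h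
    interval_cases n
    · rw [pderiv_eq_zero_of_isHomogeneous_zero i h]; exact isHomogeneous_zero _ _ _
    · simpa using this
  exact pderiv_eq_zero_of_isHomogeneous_zero i h1

lemma r2_isHomogeneous : (r2 m).IsHomogeneous 2 := by
  rw [r2]
  exact MvPolynomial.IsHomogeneous.sum _ _ _ fun i _ => isHomogeneous_X_pow i 2

lemma r2_pow_isHomogeneous (j : ℕ) : (r2 m ^ j).IsHomogeneous (2 * j) := by
  induction j with
  | zero => simpa using isHomogeneous_one (Fin m) ℝ
  | succ j ih =>
      have h2 : 2 * (j + 1) = 2 * j + 2 := by ring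
      rw [pow_succ, h2]
      exact ih.mul (r2_isHomogeneous (m := m))

instance homog_fd (n : ℕ) : FiniteDimensional ℝ (homogeneousSubmodule (Fin m) ℝ n) := by
  have h : homogeneousSubmodule (Fin m) ℝ n ≤ MvPolynomial.restrictTotalDegree (Fin m) ℝ n :=
    fun p hp => (MvPolynomial.mem_restrictTotalDegree _ _ _).mpr hp.totalDegree_le
  exact Submodule.finiteDimensional_of_le h

set_option maxHeartbeats 1000000 in
set_option synthInstance.maxHeartbeats 400000 in
lemma step_sup (k : ℕ) (hr2 : r2 m ≠ 0) :
    homogeneousSubmodule (Fin m) ℝ (k + 2) =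
      (homogeneousSubmodule (Fin m) ℝ (k + 2) ⊓ LinearMap.ker (lap m)) ⊔
        Submodule.map (LinearMap.mulLeft ℝ (r2 m)) (homogeneousSubmodule (Fin m) ℝ k) := by
  classical
  set H2 := homogeneousSubmodule (Fin m) ℝ (k + 2) with hH2
  set H0 := homogeneousSubmodule (Fin m) ℝ k with hH0
  set A := H2 ⊓ LinearMap.ker (lap m) with hA
  set B := Submodule.map (LinearMap.mulLeft ℝ (r2 m)) H0 with hB
  have hBle : B ≤ H2 := by
    rintro x ⟨q, hq, rfl⟩
    have : (r2 m * q).IsHomogeneous (2 + k) := (r2_isHomogeneous (m := m)).mul hq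
    simpa [LinearMap.mulLeft_apply, add_comm, hH2, mem_homogeneousSubmodule] using this
  have hAle : A ≤ H2 := inf_le_left
  have hinj : Function.Injective (LinearMap.mulLeft ℝ (r2 m)) := by
    intro a b hab
    exact mul_left_cancel₀ hr2 (by simpa [LinearMap.mulLeft_apply] using hab)
  have hdisj : Disjoint A B := by
    rw [Submodule.disjoint_def]
    rintro x ⟨-, hker⟩ ⟨q, -, rfl⟩
    exact harmonic_r2_mul_eq_zero (LinearMap.mem_ker.mp hker)
  -- finite dimensionality
  haveI fd2 : FiniteDimensional ℝ H2 := homog_fd _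
  haveI fd0 : FiniteDimensional ℝ H0 := homog_fd _
  haveI : FiniteDimensional ℝ A := Submodule.finiteDimensional_of_le hAle
  haveI : FiniteDimensional ℝ B := Submodule.finiteDimensional_of_le hBle
  -- rank-nullity for lap restricted to H2
  have hmaple : Submodule.map (lap m) H2 ≤ H0 := by
    rintro x ⟨p, hp, rfl⟩
    simpa [hH0, mem_homogeneousSubmodule] using lap_isHomogeneous hp
  haveI : FiniteDimensional ℝ (Submodule.map (lap m) H2) :=
    Submodule.finiteDimensional_of_le hmaple
  have hrn : Module.finrank ℝ (Submodule.map (lap m) H2) + Module.finrank ℝ A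
      = Module.finrank ℝ H2 := by
    have h1 := LinearMap.finrank_range_add_finrank_ker ((lap m).domRestrict H2)
    rw [LinearMap.range_domRestrict, LinearMap.ker_domRestrict] at h1
    have hcomap : (LinearMap.ker (lap m)).comap H2.subtype = A.comap H2.subtype := by
      rw [hA, Submodule.comap_inf, Submodule.comap_subtype_self, top_inf_eq]
    rw [hcomap] at h1
    rw [← h1]
    congr 1
    exact (Submodule.comapSubtypeEquivOfLe hAle).finrank_eq.symm
  -- dimension comparison
  have hBrank : Module.finrank ℝ B = Module.finrank ℝ H0 :=
    (Submodule.equivMapOfInjective _ hinj H0).finrank_eq.symm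
  have hsuple : A ⊔ B ≤ H2 := sup_le hAle hBle
  have hsuprank : Module.finrank ℝ (A ⊔ B : Submodule ℝ (Pol m))
      = Module.finrank ℝ A + Module.finrank ℝ B := by
    have := Submodule.finrank_sup_add_finrank_inf_eq A B
    rw [hdisj.eq_bot] at this
    simpa using this
  have hmaprank : Module.finrank ℝ (Submodule.map (lap m) H2) = Module.finrank ℝ H0 := by
    have hle1 : Module.finrank ℝ (Submodule.map (lap m) H2) ≤ Module.finrank ℝ H0 :=
      Submodule.finrank_mono hmaple
    have hle2 : Module.finrank ℝ (A ⊔ B : Submodule ℝ (Pol m)) ≤ Module.finrank ℝ H2 :=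
      Submodule.finrank_mono hsuple
    omega
  have hfin : Module.finrank ℝ H2 ≤ Module.finrank ℝ (A ⊔ B : Submodule ℝ (Pol m)) := by
    omega
  exact (Submodule.eq_of_le_of_finrank_le hsuple hfin).symm

end Scalar2
noncomputable section Scalar3
open LinearMap Submodule
variable {m : ℕ}

lemma r2_eq_zero_iff : r2 m = 0 ↔ m = 0 := by
  constructor
  · intro h
    by_contra hm
    have := congrArg (MvPolynomial.eval (fun _ => (1:ℝ))) h
    rw [r2] at this
    simp only [map_sum, MvPolynomial.eval_pow, MvPolynomial.eval_X, one_pow, map_zero,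
      Finset.sum_const, Finset.card_univ, Fintype.card_fin, nsmul_eq_mul, mul_one] at this
    exact_mod_cast hm (Nat.cast_injective (this.trans (Nat.cast_zero).symm) )
  · intro h
    subst h
    rw [r2]
    simp

/-- harmonic homogeneous polynomials -/
def harmS (m n : ℕ) : Submodule ℝ (Pol m) :=
  homogeneousSubmodule (Fin m) ℝ n ⊓ LinearMap.ker (lap m)

/-- `r^{2j}` times harmonic, within degree `k` -/
def FjS (m k j : ℕ) : Submodule ℝ (Pol m) :=
  Submodule.map (LinearMap.mulLeft ℝ (r2 m ^ j)) (harmS m (k - 2 * j))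

lemma harmS_of_low {n : ℕ} (hn : n ≤ 1) :
    harmS m n = homogeneousSubmodule (Fin m) ℝ n :=
  inf_eq_left.mpr fun p hp => LinearMap.mem_ker.mpr (lap_eq_zero_of_low hn hp)

lemma FjS_zero (k : ℕ) : FjS m k 0 = harmS m k := by
  rw [FjS, pow_zero, LinearMap.mulLeft_one, Nat.mul_zero, Nat.sub_zero, Submodule.map_id]

lemma FjS_succ (k j : ℕ) :
    FjS m (k + 2) (j + 1) = Submodule.map (LinearMap.mulLeft ℝ (r2 m)) (FjS m k j) := by
  have h1 : k + 2 - 2 * (j + 1) = k - 2 * j := by omega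
  rw [FjS, FjS, h1, pow_succ, mul_comm (r2 m ^ j) (r2 m), LinearMap.mulLeft_mul,
    Submodule.map_comp]

lemma step_sup' (k : ℕ) :
    homogeneousSubmodule (Fin m) ℝ (k + 2) =
      harmS m (k + 2) ⊔
        Submodule.map (LinearMap.mulLeft ℝ (r2 m)) (homogeneousSubmodule (Fin m) ℝ k) := by
  by_cases hr : r2 m = 0
  · have hm : m = 0 := r2_eq_zero_iff.mp hr
    subst hm
    have hlap : lap 0 = 0 := by
      rw [lap]
      simp
    rw [harmS, hlap, hr, LinearMap.mulLeft_zero_eq_zero, Submodule.map_zero, LinearMap.ker_zero]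
    simp
  · exact step_sup k hr

lemma disj_harm_r2 (n : ℕ) (S : Submodule ℝ (Pol m)) :
    Disjoint (harmS m n) (Submodule.map (LinearMap.mulLeft ℝ (r2 m)) S) := by
  rw [Submodule.disjoint_def]
  rintro x ⟨-, hker⟩ ⟨q, -, rfl⟩
  exact harmonic_r2_mul_eq_zero (LinearMap.mem_ker.mp hker)

lemma biSup_range_succ' {X : Type*} [CompleteLattice X] (n : ℕ) (G : ℕ → X) :
    ⨆ j ∈ Finset.range (n + 1), G j = G 0 ⊔ ⨆ j ∈ Finset.range n, G (j + 1) := by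
  apply le_antisymm
  · refine iSup₂_le fun j hj => ?_
    match j with
    | 0 => exact le_sup_left
    | (i + 1) =>
        refine le_trans ?_ le_sup_right
        have hi : i ∈ Finset.range n := by simp at hj ⊢; omega
        exact le_iSup₂ (f := fun j (_ : j ∈ Finset.range n) => G (j + 1)) i hi
  · refine sup_le ?_ ?_
    · exact le_iSup₂ (f := fun j (_ : j ∈ Finset.range (n+1)) => G j) 0 (by simp)
    · refine iSup₂_le fun i hi => ?_
      have : i + 1 ∈ Finset.range (n + 1) := by simp at hi ⊢; omega
      exact le_iSup₂ (f := fun j (_ : j ∈ Finset.range (n+1)) => G j) (i+1) this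

lemma map_biSup_range {X Y : Type*} [AddCommGroup X] [Module ℝ X] [AddCommGroup Y] [Module ℝ Y]
    (f : X →ₗ[ℝ] Y) (n : ℕ) (S : ℕ → Submodule ℝ X) :
    Submodule.map f (⨆ j ∈ Finset.range n, S j) =
      ⨆ j ∈ Finset.range n, Submodule.map f (S j) := by
  rw [Submodule.map_iSup]
  exact iSup_congr fun j => Submodule.map_iSup _ _

set_option maxHeartbeats 2000000 in
set_option synthInstance.maxHeartbeats 400000 in
theorem scalarFischer (m : ℕ) : ∀ k : ℕ,
    (homogeneousSubmodule (Fin m) ℝ k = ⨆ j ∈ Finset.range (k / 2 + 1), FjS m k j) ∧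
    (∀ g : ℕ → Pol m, (∀ j ∈ Finset.range (k / 2 + 1), g j ∈ FjS m k j) →
      ∑ j ∈ Finset.range (k / 2 + 1), g j = 0 → ∀ j ∈ Finset.range (k / 2 + 1), g j = 0) := by
  intro k
  induction k using Nat.strong_induction_on with
  | _ k ih =>
    match k with
    | 0 =>
      constructor
      · rw [biSup_range_succ']
        simp [FjS_zero, harmS_of_low]
      · intro g _ hsum j hj
        have hj0 : j = 0 := by simp at hj; omega
        subst hj0
        rwa [Finset.sum_range_one] at hsum
    | 1 =>
      constructor
      · rw [biSup_range_succ']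
        simp [FjS_zero, harmS_of_low]
      · intro g _ hsum j hj
        have hj0 : j = 0 := by simp at hj; omega
        subst hj0
        rwa [Finset.sum_range_one] at hsum
    | (k + 2) =>
      obtain ⟨IH1, IH2⟩ := ih k (by omega)
      have hdiv : (k + 2) / 2 + 1 = (k / 2 + 1) + 1 := by omega
      have e1 : ⨆ j ∈ Finset.range (k/2+1), Submodule.map (LinearMap.mulLeft ℝ (r2 m)) (FjS m k j)
          = ⨆ j ∈ Finset.range (k/2+1), FjS m (k+2) (j+1) :=
        iSup_congr fun j => iSup_congr fun _ => (FjS_succ k j).symm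
      constructor
      · calc homogeneousSubmodule (Fin m) ℝ (k+2)
            = harmS m (k + 2) ⊔
              Submodule.map (LinearMap.mulLeft ℝ (r2 m)) (homogeneousSubmodule (Fin m) ℝ k) :=
              step_sup' k
          _ = harmS m (k + 2) ⊔ ⨆ j ∈ Finset.range (k/2+1), FjS m (k+2) (j+1) := by
              rw [IH1, map_biSup_range, e1]
          _ = ⨆ j ∈ Finset.range ((k+2) / 2 + 1), FjS m (k+2) j := by
              rw [hdiv, biSup_range_succ' (k/2+1) (fun j => FjS m (k+2) j), FjS_zero]
      · intro g hmem hsum j hj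
        rw [hdiv] at hj hsum hmem
        rw [Finset.sum_range_succ'] at hsum
        -- choose preimages
        have hchoice : ∀ i ∈ Finset.range (k / 2 + 1),
            ∃ y, y ∈ FjS m k i ∧ (LinearMap.mulLeft ℝ (r2 m)) y = g (i + 1) := by
          intro i hi
          have h1 : i + 1 ∈ Finset.range (k / 2 + 1 + 1) := by
            simp at hi ⊢; omega
          have := hmem (i + 1) h1
          rw [FjS_succ] at this
          simpa [Submodule.mem_map] using this
        choose! w hwmem hwval0 using hchoice
        have hwval : ∀ i ∈ Finset.range (k / 2 + 1), r2 m * w i = g (i + 1) := by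
          intro i hi
          have := hwval0 i hi
          rwa [LinearMap.mulLeft_apply] at this
        have hsum2 : r2 m * (∑ i ∈ Finset.range (k / 2 + 1), w i) + g 0 = 0 := by
          rw [Finset.mul_sum, Finset.sum_congr rfl hwval]
          exact hsum
        -- g 0 = 0 via disjointness
        have hg0mem : g 0 ∈ harmS m (k + 2) := by
          have := hmem 0 (by simp)
          rwa [FjS_zero] at this
        have hg0B : g 0 ∈ Submodule.map (LinearMap.mulLeft ℝ (r2 m)) ⊤ := by
          refine ⟨-(∑ i ∈ Finset.range (k / 2 + 1), w i), trivial, ?_⟩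
          rw [LinearMap.mulLeft_apply]
          linear_combination -hsum2
        have hg0 : g 0 = 0 :=
          (Submodule.disjoint_def).mp (disj_harm_r2 (k + 2) ⊤) (g 0) hg0mem hg0B
        have hr2W : r2 m * (∑ i ∈ Finset.range (k / 2 + 1), w i) = 0 := by
          rw [hg0] at hsum2
          simpa using hsum2
        have hgsucc : ∀ i ∈ Finset.range (k / 2 + 1), g (i + 1) = 0 := by
          by_cases hr : r2 m = 0
          · intro i hi
            rw [← hwval i hi, hr, zero_mul]
          · have hW : (∑ i ∈ Finset.range (k / 2 + 1), w i) = 0 := by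
              rcases mul_eq_zero.mp hr2W with h | h
              · exact absurd h hr
              · exact h
            have := IH2 w hwmem hW
            intro i hi
            rw [← hwval i hi, this i hi, mul_zero]
        match j with
        | 0 => exact hg0
        | (i + 1) => exact hgsucc i (by simp at hj ⊢; omega)

end Scalar3
noncomputable section PartTwo
open LinearMap Submodule
variable {m : ℕ}

lemma pderiv_pderiv_comm (i l : Fin m) (p : Pol m) :
    (pderiv i) ((pderiv l) p) = (pderiv l) ((pderiv i) p) := by
  rcases eq_or_ne i l with rfl | hne
  · rfl
  · rw [as_sum p]
    simp only [map_sum]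
    refine Finset.sum_congr rfl fun v _ => ?_
    rw [pderiv_monomial, pderiv_monomial, pderiv_monomial, pderiv_monomial]
    have h1 : (v - Finsupp.single l 1 - Finsupp.single i 1 : Fin m →₀ ℕ)
        = v - Finsupp.single i 1 - Finsupp.single l 1 := tsub_right_comm
    have h2 : ((v - Finsupp.single l 1 : Fin m →₀ ℕ) i) = v i := by
      rw [Finsupp.tsub_apply, Finsupp.single_eq_of_ne' (Ne.symm hne), Nat.sub_zero]
    have h3 : ((v - Finsupp.single i 1 : Fin m →₀ ℕ) l) = v l := by
      rw [Finsupp.tsub_apply, Finsupp.single_eq_of_ne' hne, Nat.sub_zero]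
    rw [h1, h2, h3]
    congr 1
    ring

lemma fsgn_mul_self (i : Fin m) (B : Finset (Fin m)) : fsgn i B * fsgn i B = 1 := by
  rw [fsgn, ← pow_add]
  exact Even.neg_one_pow ⟨_, rfl⟩

lemma fsgn_erase_self (i : Fin m) (B : Finset (Fin m)) : fsgn i (B.erase i) = fsgn i B := by
  rw [fsgn, fsgn, Finset.filter_erase, Finset.erase_eq_of_notMem]
  simp

lemma fsgn_insert_self (i : Fin m) (B : Finset (Fin m)) : fsgn i (insert i B) = fsgn i B := by
  rw [fsgn, fsgn, Finset.filter_insert, if_neg (lt_irrefl i)]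

lemma neg_one_pow_pred {b : ℕ} (hb : 1 ≤ b) : (-1:ℝ)^b = -(-1:ℝ)^(b-1) := by
  obtain ⟨c, rfl⟩ : ∃ c, b = c + 1 := ⟨b - 1, by omega⟩
  rw [pow_succ, Nat.add_sub_cancel]
  ring

lemma fsgn_key {i l : Fin m} {B : Finset (Fin m)} (hi : i ∈ B) (hl : l ∉ B) (hne : i ≠ l) :
    fsgn i B * fsgn l (B.erase i) = -(fsgn l B * fsgn i (insert l B)) := by
  classical
  rw [fsgn, fsgn, fsgn, fsgn]
  set a := (B.filter (fun j => j < i)).card with ha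
  set b := (B.filter (fun j => j < l)).card with hb
  rcases lt_or_gt_of_ne hne with hil | hli
  · -- i < l
    have hmem : i ∈ B.filter (fun j => j < l) := Finset.mem_filter.mpr ⟨hi, hil⟩
    have e1 : ((B.erase i).filter (fun j => j < l)).card = b - 1 := by
      rw [Finset.filter_erase, Finset.card_erase_of_mem hmem]
    have e2 : ((insert l B).filter (fun j => j < i)).card = a := by
      rw [Finset.filter_insert, if_neg (by exact fun h => absurd (h.trans hil) (lt_irrefl l))]
    have hb1 : 1 ≤ b := Finset.card_pos.mpr ⟨i, hmem⟩ 
    rw [e1, e2]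
    rw [neg_one_pow_pred hb1]
    ring
  · -- l < i
    have e1 : ((B.erase i).filter (fun j => j < l)).card = b := by
      rw [Finset.filter_erase, Finset.erase_eq_of_notMem]
      intro hmem
      exact absurd ((Finset.mem_filter.mp hmem).2.trans hli) (lt_irrefl i)
    have e2 : ((insert l B).filter (fun j => j < i)).card = a + 1 := by
      rw [Finset.filter_insert, if_pos hli, Finset.card_insert_of_notMem]
      intro hmem
      exact hl (Finset.mem_filter.mp hmem).1
    rw [e1, e2, pow_succ]
    ring

lemma extD_apply (P : MixedForm m) (B : Finset (Fin m)) :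
    extD m P B = ∑ i ∈ B, fsgn i B • (pderiv i) (P (B.erase i)) := by
  simp [extD, LinearMap.pi_apply, LinearMap.sum_apply]

lemma coD_apply (P : MixedForm m) (B : Finset (Fin m)) :
    coD m P B = ∑ i ∈ Bᶜ, fsgn i B • (pderiv i) (P (insert i B)) := by
  simp [coD, LinearMap.pi_apply, LinearMap.sum_apply]

lemma hodgeLap_apply (P : MixedForm m) (B : Finset (Fin m)) :
    hodgeLap m P B = lap m (P B) := by
  classical
  have hlap : lap m (P B) = ∑ i : Fin m, (pderiv i) ((pderiv i) (P B)) := by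
    rw [lap, LinearMap.sum_apply]; rfl
  have h0 : hodgeLap m P B = extD m (coD m P) B + coD m (extD m P) B := by
    rw [hodgeLap]; rfl
  have h1 : extD m (coD m P) B
      = (∑ i ∈ B, (pderiv i) ((pderiv i) (P B)))
        + ∑ i ∈ B, ∑ l ∈ Bᶜ, (fsgn i B * fsgn l (B.erase i)) •
            (pderiv i) ((pderiv l) (P (insert l (B.erase i)))) := by
    rw [extD_apply]
    have : ∀ i ∈ B, fsgn i B • (pderiv i) (coD m P (B.erase i))
        = (pderiv i) ((pderiv i) (P B))
          + ∑ l ∈ Bᶜ, (fsgn i B * fsgn l (B.erase i)) •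
              (pderiv i) ((pderiv l) (P (insert l (B.erase i)))) := by
      intro i hi
      rw [coD_apply, Finset.compl_erase, Finset.sum_insert (by simp [hi]), map_add, smul_add,
        map_sum, Finset.smul_sum]
      congr 1
      · rw [Finset.insert_erase hi, Derivation.map_smul, smul_smul, fsgn_erase_self, fsgn_mul_self, one_smul]
      · refine Finset.sum_congr rfl fun l _ => ?_
        rw [Derivation.map_smul, smul_smul]
    rw [Finset.sum_congr rfl this, Finset.sum_add_distrib]
  have h2 : coD m (extD m P) B
      = (∑ l ∈ Bᶜ, (pderiv l) ((pderiv l) (P B)))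
        + ∑ l ∈ Bᶜ, ∑ i ∈ B, (fsgn l B * fsgn i (insert l B)) •
            (pderiv l) ((pderiv i) (P (insert l (B.erase i)))) := by
    rw [coD_apply]
    have : ∀ l ∈ Bᶜ, fsgn l B • (pderiv l) (extD m P (insert l B))
        = (pderiv l) ((pderiv l) (P B))
          + ∑ i ∈ B, (fsgn l B * fsgn i (insert l B)) •
              (pderiv l) ((pderiv i) (P (insert l (B.erase i)))) := by
      intro l hl
      have hlB : l ∉ B := by simpa using hl
      rw [extD_apply, Finset.sum_insert hlB, map_add, smul_add, map_sum, Finset.smul_sum]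
      congr 1
      · rw [Finset.erase_insert hlB, Derivation.map_smul, smul_smul, fsgn_insert_self, fsgn_mul_self,
          one_smul]
      · refine Finset.sum_congr rfl fun i hi => ?_
        have hne : l ≠ i := fun h => hlB (h ▸ hi)
        rw [Finset.erase_insert_of_ne hne, Derivation.map_smul, smul_smul]
    rw [Finset.sum_congr rfl this, Finset.sum_add_distrib]
  -- combine
  rw [h0, h1, h2, hlap]
  have hdiag : (∑ i ∈ B, (pderiv i) ((pderiv i) (P B)))
      + (∑ l ∈ Bᶜ, (pderiv l) ((pderiv l) (P B)))
      = ∑ i : Fin m, (pderiv i) ((pderiv i) (P B)) :=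
    Finset.sum_add_sum_compl B _
  have hoff : (∑ i ∈ B, ∑ l ∈ Bᶜ, (fsgn i B * fsgn l (B.erase i)) •
          (pderiv i) ((pderiv l) (P (insert l (B.erase i)))))
      = -∑ l ∈ Bᶜ, ∑ i ∈ B, (fsgn l B * fsgn i (insert l B)) •
          (pderiv l) ((pderiv i) (P (insert l (B.erase i)))) := by
    rw [Finset.sum_comm, ← Finset.sum_neg_distrib]
    refine Finset.sum_congr rfl fun l hl => ?_
    rw [← Finset.sum_neg_distrib]
    refine Finset.sum_congr rfl fun i hi => ?_
    have hlB : l ∉ B := by simpa using hl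
    have hne : i ≠ l := fun h => hlB (h ▸ hi)
    rw [fsgn_key hi hlB hne, pderiv_pderiv_comm, neg_smul]
  rw [hoff, ← hdiag]
  abel

end PartTwo
noncomputable section PartThree
open LinearMap Submodule
variable {m : ℕ}

/-- Forms concentrated in form-degree `s` with all coefficients in `U`. -/
def CompS (m s : ℕ) (U : Submodule ℝ (Pol m)) : Submodule ℝ (MixedForm m) :=
  Submodule.pi Set.univ fun B => if B.card = s then U else ⊥

lemma mem_CompS {s : ℕ} {U : Submodule ℝ (Pol m)} {P : MixedForm m} :
    P ∈ CompS m s U ↔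
      (∀ B : Finset (Fin m), B.card = s → P B ∈ U) ∧
        (∀ B : Finset (Fin m), B.card ≠ s → P B = 0) := by
  rw [CompS, Submodule.mem_pi]
  constructor
  · intro h
    refine ⟨fun B hB => ?_, fun B hB => ?_⟩
    · have := h B trivial; rwa [if_pos hB] at this
    · have := h B trivial; rwa [if_neg hB, Submodule.mem_bot] at this
  · rintro ⟨h1, h2⟩ B -
    by_cases hB : B.card = s
    · rw [if_pos hB]; exact h1 B hB
    · rw [if_neg hB, Submodule.mem_bot]; exact h2 B hB

lemma CompS_mono {s : ℕ} {U V : Submodule ℝ (Pol m)} (h : U ≤ V) :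
    CompS m s U ≤ CompS m s V := by
  intro P hP
  rw [mem_CompS] at hP ⊢
  exact ⟨fun B hB => h (hP.1 B hB), hP.2⟩

lemma mem_Homog {k : ℕ} {P : MixedForm m} :
    P ∈ Homog m k ↔ ∀ B, (P B).IsHomogeneous k := Iff.rfl

lemma mem_DegSupp {S : Set ℕ} {P : MixedForm m} :
    P ∈ DegSupp m S ↔ ∀ B : Finset (Fin m), B.card ∉ S → P B = 0 := Iff.rfl

lemma homog_degsupp_eq (k s : ℕ) :
    Homog m k ⊓ DegSupp m {s} = CompS m s (homogeneousSubmodule (Fin m) ℝ k) := by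
  ext P
  rw [Submodule.mem_inf, mem_CompS, mem_Homog, mem_DegSupp]
  constructor
  · rintro ⟨h1, h2⟩
    exact ⟨fun B _ => h1 B, fun B hB => h2 B (by simpa using hB)⟩
  · rintro ⟨h1, h2⟩
    refine ⟨fun B => ?_, fun B hB => h2 B (by simpa using hB)⟩
    by_cases hB : B.card = s
    · exact h1 B hB
    · rw [h2 B hB]; exact isHomogeneous_zero _ _ _

lemma mem_ker_hodgeLap {P : MixedForm m} :
    P ∈ LinearMap.ker (hodgeLap m) ↔ ∀ B, lap m (P B) = 0 := by
  rw [LinearMap.mem_ker]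
  constructor
  · intro h B
    rw [← hodgeLap_apply]
    exact congrFun h B
  · intro h
    funext B
    rw [hodgeLap_apply]
    exact h B

lemma kerDelta_eq (k s : ℕ) : KerDelta m k s = CompS m s (harmS m k) := by
  ext P
  rw [KerDelta, Submodule.mem_inf, Submodule.mem_inf, mem_CompS, mem_Homog, mem_DegSupp,
    mem_ker_hodgeLap]
  constructor
  · rintro ⟨⟨h1, h2⟩, h3⟩
    refine ⟨fun B hB => ⟨h1 B, LinearMap.mem_ker.mpr (h3 B)⟩, fun B hB => h2 B (by simpa using hB)⟩
  · rintro ⟨h1, h2⟩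
    refine ⟨⟨fun B => ?_, fun B hB => h2 B (by simpa using hB)⟩, fun B => ?_⟩
    · by_cases hB : B.card = s
      · exact (h1 B hB).1
      · rw [h2 B hB]; exact isHomogeneous_zero _ _ _
    · by_cases hB : B.card = s
      · exact LinearMap.mem_ker.mp (h1 B hB).2
      · rw [h2 B hB, map_zero]

lemma mulRpow_apply (j : ℕ) (Q : MixedForm m) (B : Finset (Fin m)) :
    mulRpow m j Q B = r2 m ^ j * Q B := rfl

lemma map_mulRpow_CompS (j s : ℕ) (U : Submodule ℝ (Pol m)) :
    Submodule.map (mulRpow m j) (CompS m s U) =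
      CompS m s (Submodule.map (LinearMap.mulLeft ℝ (r2 m ^ j)) U) := by
  apply le_antisymm
  · rintro x ⟨Q, hQ, rfl⟩
    rw [SetLike.mem_coe, mem_CompS] at hQ
    rw [mem_CompS]
    constructor
    · intro B hB
      exact ⟨Q B, hQ.1 B hB, rfl⟩
    · intro B hB
      rw [mulRpow_apply, hQ.2 B hB, mul_zero]
  · intro P hP
    rw [mem_CompS] at hP
    have hex : ∀ B : Finset (Fin m), ∃ y : Pol m,
        (B.card = s → y ∈ U ∧ r2 m ^ j * y = P B) ∧ (B.card ≠ s → y = 0) := by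
      intro B
      by_cases hB : B.card = s
      · obtain ⟨y, hy, hy2⟩ := hP.1 B hB
        exact ⟨y, fun _ => ⟨hy, by rwa [LinearMap.mulLeft_apply] at hy2⟩, fun h => absurd hB h⟩
      · exact ⟨0, fun h => absurd h hB, fun _ => rfl⟩
    choose Q hQ1 hQ2 using hex
    refine ⟨Q, ?_, ?_⟩
    · rw [SetLike.mem_coe, mem_CompS]
      exact ⟨fun B hB => (hQ1 B hB).1, hQ2⟩
    · funext B
      rw [mulRpow_apply]
      by_cases hB : B.card = s
      · exact (hQ1 B hB).2
      · rw [hQ2 B hB, hP.2 B hB, mul_zero]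

lemma exists_sum_of_mem_biSup {X : Type*} [AddCommGroup X] [Module ℝ X] {n : ℕ}
    {U : ℕ → Submodule ℝ X} {x : X} (hx : x ∈ ⨆ j ∈ Finset.range n, U j) :
    ∃ g : ℕ → X, (∀ j, g j ∈ U j) ∧ ∑ j ∈ Finset.range n, g j = x := by
  rw [Submodule.mem_iSup_iff_exists_finsupp] at hx
  obtain ⟨f, hf, hsum⟩ := hx
  have hzero : ∀ j, j ∉ Finset.range n → f j = 0 := by
    intro j hj
    have := hf j
    rw [iSup_neg hj] at this
    simpa using this
  refine ⟨f, fun j => ?_, ?_⟩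
  · by_cases hj : j ∈ Finset.range n
    · have := hf j; rwa [iSup_pos hj] at this
    · rw [hzero j hj]; exact zero_mem _
  · rw [← hsum]
    exact (Finsupp.sum_of_support_subset f
      (fun j hj => by by_contra h; exact Finsupp.mem_support_iff.mp hj (hzero j h))
      (fun _ x => x) (fun _ _ => rfl)).symm

lemma biSup_CompS (n s : ℕ) (U : ℕ → Submodule ℝ (Pol m)) :
    (⨆ j ∈ Finset.range n, CompS m s (U j)) = CompS m s (⨆ j ∈ Finset.range n, U j) := by
  apply le_antisymm
  · exact iSup₂_le fun j hj => CompS_mono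
      (le_iSup₂ (f := fun j (_ : j ∈ Finset.range n) => U j) j hj)
  · intro P hP
    rw [mem_CompS] at hP
    have hex : ∀ B : Finset (Fin m), ∃ g : ℕ → Pol m,
        (∀ j, g j ∈ U j) ∧ (∑ j ∈ Finset.range n, g j = P B) ∧
          (B.card ≠ s → ∀ j, g j = 0) := by
      intro B
      by_cases hB : B.card = s
      · obtain ⟨g, h1, h2⟩ := exists_sum_of_mem_biSup (hP.1 B hB)
        exact ⟨g, h1, h2, fun h => absurd hB h⟩
      · exact ⟨fun _ => 0, fun j => zero_mem _, by rw [hP.2 B hB]; simp, fun _ _ => rfl⟩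
    choose g hg1 hg2 hg3 using hex
    have hPsum : P = ∑ j ∈ Finset.range n, (fun B => g B j : MixedForm m) := by
      funext B
      rw [Finset.sum_apply]
      exact (hg2 B).symm
    rw [hPsum]
    refine Submodule.sum_mem _ fun j hj => ?_
    have hmem : (fun B => g B j : MixedForm m) ∈ CompS m s (U j) := by
      rw [mem_CompS]
      constructor
      · intro B _
        exact hg1 B j
      · intro B hB
        exact hg3 B hB j
    exact Submodule.mem_iSup_of_mem j (Submodule.mem_iSup_of_mem hj hmem)

end PartThree
noncomputable section PartFour
open LinearMap Submodule

lemma indep_of_sum_zero {V : Type*} [AddCommGroup V] [Module ℝ V] (n : ℕ)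
    (p : ℕ → Submodule ℝ V)
    (KL : ∀ g : ℕ → V, (∀ j ∈ Finset.range n, g j ∈ p j) →
      ∑ j ∈ Finset.range n, g j = 0 → ∀ j ∈ Finset.range n, g j = 0)
    (i : {x // x ∈ Finset.range n}) (y : V) (hy : y ∈ p ↑i)
    (hy2 : y ∈ ⨆ (j : {x // x ∈ Finset.range n}) (_ : j ≠ i), p ↑j) :
    y = 0 := by
  classical
  rw [Submodule.mem_iSup_iff_exists_finsupp] at hy2
  obtain ⟨f, hf, hsum⟩ := hy2
  have hfi : f i = 0 := by
    have := hf i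
    rw [iSup_neg (by simp)] at this
    simpa using this
  have hfj : ∀ j, j ≠ i → f j ∈ p ↑j := by
    intro j hj
    have := hf j
    rwa [iSup_pos hj] at this
  set g : ℕ → V := fun n' =>
    if hn : n' ∈ Finset.range n then
      (if (⟨n', hn⟩ : {x // x ∈ Finset.range n}) = i then -y else f ⟨n', hn⟩)
    else 0 with hg
  have hgmem : ∀ n' ∈ Finset.range n, g n' ∈ p n' := by
    intro n' hn
    rw [hg]
    simp only [dif_pos hn]
    by_cases h : (⟨n', hn⟩ : {x // x ∈ Finset.range n}) = i
    · rw [if_pos h]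
      have hni : (i : ℕ) = n' := by rw [← h]
      exact hni ▸ neg_mem hy
    · rw [if_neg h]
      exact hfj _ h
  have hgval : ∀ j : {x // x ∈ Finset.range n},
      g ↑j = if j = i then -y else f j := by
    intro j
    rw [hg]
    simp only [dif_pos j.2, Subtype.coe_eta]
  have hgsum : ∑ n' ∈ Finset.range n, g n' = 0 := by
    rw [← Finset.sum_attach (Finset.range n) g,
      Finset.sum_congr rfl (fun j _ => hgval j), ← Finset.univ_eq_attach,
      ← Finset.add_sum_erase _ _ (Finset.mem_univ i), if_pos rfl]
    have he : ∀ j ∈ Finset.univ.erase i, (if j = i then -y else f j) = f j := by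
      intro j hj
      rw [if_neg (Finset.mem_erase.mp hj).1]
    rw [Finset.sum_congr rfl he, Finset.sum_erase _ hfi]
    have hfy : ∑ j : {x // x ∈ Finset.range n}, f j = y := by
      rw [← hsum]
      exact (Finsupp.sum_fintype f (fun _ x => x) (fun _ => rfl)).symm
    rw [hfy]
    exact neg_add_cancel y
  have := KL g hgmem hgsum ↑i i.2
  rw [hgval i, if_pos rfl] at this
  exact neg_eq_zero.mp this

end PartFour
lemma map_mulRpow_kerDelta (m k s j : ℕ) :
    Submodule.map (mulRpow m j) (KerDelta m (k - 2 * j) s) = CompS m s (FjS m k j) := by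
  rw [kerDelta_eq, map_mulRpow_CompS]
  rfl

theorem fischer_decomposition (m k s : ℕ) (hs : s ≤ m) :
    Homog m k ⊓ DegSupp m {s} =
      (⨆ j ∈ Finset.range (k / 2 + 1),
        Submodule.map (mulRpow m j) (KerDelta m (k - 2 * j) s)) ∧
    iSupIndep (fun j : (Finset.range (k / 2 + 1) : Finset ℕ) =>
      Submodule.map (mulRpow m (j : ℕ)) (KerDelta m (k - 2 * (j : ℕ)) s)) := by
  constructor
  · calc Homog m k ⊓ DegSupp m {s}
        = CompS m s (homogeneousSubmodule (Fin m) ℝ k) := homog_degsupp_eq k s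
      _ = CompS m s (⨆ j ∈ Finset.range (k / 2 + 1), FjS m k j) := by
          rw [(scalarFischer m k).1]
      _ = ⨆ j ∈ Finset.range (k / 2 + 1), CompS m s (FjS m k j) :=
          (biSup_CompS _ _ _).symm
      _ = ⨆ j ∈ Finset.range (k / 2 + 1),
            Submodule.map (mulRpow m j) (KerDelta m (k - 2 * j) s) :=
          iSup_congr fun j => iSup_congr fun _ => (map_mulRpow_kerDelta m k s j).symm
  · rw [iSupIndep_def]
    intro i
    rw [Submodule.disjoint_def]
    intro x hxi hxsup
    rw [map_mulRpow_kerDelta, mem_CompS] at hxi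
    have hle : (⨆ (j : (Finset.range (k / 2 + 1) : Finset ℕ)) (_ : j ≠ i),
        Submodule.map (mulRpow m (j : ℕ)) (KerDelta m (k - 2 * (j : ℕ)) s))
        ≤ CompS m s (⨆ (j : (Finset.range (k / 2 + 1) : Finset ℕ)) (_ : j ≠ i),
            FjS m k (j : ℕ)) := by
      refine iSup_le fun j => iSup_le fun hj => ?_
      rw [map_mulRpow_kerDelta]
      exact CompS_mono
        (le_iSup₂ (f := fun (j : (Finset.range (k / 2 + 1) : Finset ℕ)) (_ : j ≠ i) =>
          FjS m k (j : ℕ)) j hj)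
    have hxsup' := hle hxsup
    rw [mem_CompS] at hxsup'
    funext B
    by_cases hB : B.card = s
    · exact indep_of_sum_zero (k / 2 + 1) (FjS m k) ((scalarFischer m k).2) i (x B)
        (hxi.1 B hB) (hxsup'.1 B hB)
    · exact hxi.2 B hB
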